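/- For every finite simple graph G, θ(G) ≤ (Γ(G) + 1)·im(G), where Γ(G) = max{|N_G[x] \ N_G[y]| : xy ∈ E(G)} is the maximum privacy degree of G; in particular, θ(G) ≤ Δ(G)·im(G), where Δ(G) is the maximum degree of G. -/

import Mathlib

namespace ThetaPaper

variable {α : Type*} [DecidableEq α]

def delF (X : Finset (Finset α)) (v : α) : Finset (Finset α) :=
  X.filter fun S => v ∉ S

def lkF (X : Finset (Finset α)) (v : α) : Finset (Finset α) :=
  X.filter fun T => v ∉ T ∧ insert v T ∈ X

def vertF (X : Finset (Finset α)) : Finset α := X.biUnion id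

def nonConeF (X : Finset (Finset α)) : Finset α :=
  (vertF X).filter fun v => delF X v ≠ lkF X v

lemma delF_card_lt {X : Finset (Finset α)} {v : α} (h : v ∈ nonConeF X) :
    (delF X v).card < X.card := by
  obtain ⟨A, hA, hvA⟩ := Finset.mem_biUnion.mp (Finset.mem_filter.mp h).1
  refine Finset.card_lt_card ⟨Finset.filter_subset _ _, fun hsub => ?_⟩
  have h2 := hsub hA
  rw [delF, Finset.mem_filter] at h2
  exact h2.2 hvA

lemma lkF_card_lt {X : Finset (Finset α)} {v : α} (h : v ∈ nonConeF X) :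
    (lkF X v).card < X.card := by
  obtain ⟨A, hA, hvA⟩ := Finset.mem_biUnion.mp (Finset.mem_filter.mp h).1
  refine Finset.card_lt_card ⟨Finset.filter_subset _ _, fun hsub => ?_⟩
  have h2 := hsub hA
  rw [lkF, Finset.mem_filter] at h2
  exact h2.2.1 hvA

def theta (X : Finset (Finset α)) : ℕ :=
  if h : (nonConeF X).Nonempty then
    (nonConeF X).attach.inf' (Finset.attach_nonempty_iff.mpr h) fun v =>
      max (theta (delF X v.1)) (theta (lkF X v.1) + 1)
  else 0
termination_by X.card
decreasing_by
  · exact delF_card_lt v.2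
  · exact lkF_card_lt v.2

def IsComplex (X : Finset (Finset α)) : Prop :=
  ∀ A ∈ X, ∀ B, B ⊆ A → B ∈ X

/-- `dim(X)`, as an integer: the maximum of `|A| - 1` over faces `A ∈ X`. -/
noncomputable def dimZ (X : Finset (Finset α)) : ℤ :=
  sSup {d : ℤ | ∃ A ∈ X, d = (A.card : ℤ) - 1}

/-- A circuit (minimal non-face) of `X`. -/
def IsCircuit (X : Finset (Finset α)) (S : Finset α) : Prop :=
  S ∉ X ∧ ∀ T ⊂ S, T ∈ X

/-- A circuit cover of `X`. -/
def IsCircuitCover (X : Finset (Finset α)) (C : Finset α) : Prop :=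
  ∀ S : Finset α, IsCircuit X S → (S.card : ℤ) - 1 ≤ ((S ∩ C).card : ℤ)

/-- The circuit cover number `ccn(X)` of a complex with vertex set `V`. -/
noncomputable def ccnZ (V : Finset α) (X : Finset (Finset α)) : ℤ :=
  sInf {k : ℤ | ∃ C ⊆ V, IsCircuitCover X C ∧
    k = dimZ (X.filter fun A => A ⊆ C) + 1}

/-- The simplicial join. -/
def joinF (X₁ X₂ : Finset (Finset α)) : Finset (Finset α) :=
  X₁.biUnion fun A => X₂.image fun B => A ∪ B

/-- A facet (maximal face) of `X`. -/
def IsFacet (X : Finset (Finset α)) (B : Finset α) : Prop :=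
  B ∈ X ∧ ∀ C ∈ X, B ⊆ C → C = B

/-- An elementary `k`-collapse: remove the interval `[A, B]` where `A` is a face of size
at most `k` contained in the unique facet `B`. -/
def ElemCollapse (k : ℕ) (X Y : Finset (Finset α)) : Prop :=
  ∃ A B : Finset α, A ∈ X ∧ A.card ≤ k ∧ IsFacet X B ∧ A ⊆ B ∧
    (∀ C, IsFacet X C → A ⊆ C → C = B) ∧
    Y = X.filter fun C => ¬ (A ⊆ C ∧ C ⊆ B)

/-- `X` is `k`-collapsible: it reduces to the void complex by elementary `k`-collapses. -/
def Collapsible (k : ℕ) (X : Finset (Finset α)) : Prop :=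
  Relation.ReflTransGen (ElemCollapse k) X ∅

/-- The collapsibility number `C(X)`. -/
noncomputable def collapseNum (X : Finset (Finset α)) : ℕ :=
  sInf {k : ℕ | Collapsible k X}

/-- `k(X)`: the maximum size of a set `{x₁, …, x_k}` of vertices of `X` admitting facets
`A₁, …, A_{k+1}` with `x_i ∉ A_i` and `x_i ∈ A_j` for `i < j`. -/
noncomputable def kNum (X : Finset (Finset α)) : ℕ :=
  sSup {k : ℕ | ∃ (x : Fin k → α) (A : Fin (k + 1) → Finset α),
    Function.Injective x ∧ (∀ i, {x i} ∈ X) ∧ (∀ j, IsFacet X (A j)) ∧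
    (∀ i : Fin k, x i ∉ A i.castSucc) ∧
    (∀ (i : Fin k) (j : Fin (k + 1)), (i : ℕ) < (j : ℕ) → x i ∈ A j)}

/-- Vertex decomposable simplicial complexes. -/
inductive VertexDecomposable : Finset (Finset α) → Prop
  | simplex (S : Finset α) : VertexDecomposable S.powerset
  | shed (X : Finset (Finset α)) (v : α) (hv : {v} ∈ X)
      (hdel : VertexDecomposable (delF X v)) (hlk : VertexDecomposable (lkF X v))
      (hfacet : ∀ B, IsFacet (delF X v) B → IsFacet X B) : VertexDecomposable X

section Graphs

variable {V : Type*} [Fintype V] [DecidableEq V]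

open Classical in
/-- The independence complex of a graph, as a `Finset` of faces. -/
noncomputable def indComplex (G : SimpleGraph V) : Finset (Finset V) :=
  Finset.univ.powerset.filter fun A => ∀ x ∈ A, ∀ y ∈ A, ¬ G.Adj x y

/-- The theta-number of a graph: the theta-number of its independence complex. -/
noncomputable def thetaG (G : SimpleGraph V) : ℕ := theta (indComplex G)

/-- A graph is chordal if it has no induced cycle of length greater than `3`. -/
def Chordal {W : Type*} (G : SimpleGraph W) : Prop :=
  ∀ n : ℕ, 3 < n → IsEmpty (SimpleGraph.cycleGraph n ↪g G)

/-- Contraction of the edge `xy`: the merged vertex is `x`, and `y` becomes isolated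
(isolated vertices are irrelevant for the independence complex/theta-number). -/
def contractEdge (G : SimpleGraph V) (x y : V) : SimpleGraph V where
  Adj a b := a ≠ b ∧ a ≠ y ∧ b ≠ y ∧
    ((a = x ∧ (G.Adj x b ∨ G.Adj y b)) ∨
     (b = x ∧ (G.Adj a x ∨ G.Adj a y)) ∨
     (a ≠ x ∧ b ≠ x ∧ G.Adj a b))
  symm := by
    constructor
    rintro a b ⟨hab, hay, hby, h⟩
    refine ⟨Ne.symm hab, hby, hay, ?_⟩
    rcases h with ⟨ha, h⟩ | ⟨hb, h⟩ | ⟨ha, hb, h⟩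
    · exact Or.inr (Or.inl ⟨ha, h.imp (fun t => t.symm) (fun t => t.symm)⟩)
    · exact Or.inl ⟨hb, h.imp (fun t => t.symm) (fun t => t.symm)⟩
    · exact Or.inr (Or.inr ⟨hb, ha, h.symm⟩)
  loopless := by constructor; rintro a ⟨h, -⟩; exact h rfl

/-- One edge-contraction step: `H` is obtained from `G` by contracting an edge of `G`. -/
def ContractionStep (G H : SimpleGraph V) : Prop :=
  ∃ x y, G.Adj x y ∧ H = contractEdge G x y

/-- A matching of `G` (a set of pairwise disjoint edges). -/
def IsMatching (G : SimpleGraph V) (M : Finset (Sym2 V)) : Prop :=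
  (∀ e ∈ M, e ∈ G.edgeSet) ∧
    ∀ e ∈ M, ∀ f ∈ M, e ≠ f → ∀ x, x ∈ e → x ∉ f

/-- An induced matching of `G`: a matching such that no two vertices belonging to
different edges of it are adjacent. -/
def IsInducedMatching (G : SimpleGraph V) (M : Finset (Sym2 V)) : Prop :=
  IsMatching G M ∧ ∀ e ∈ M, ∀ f ∈ M, e ≠ f → ∀ x ∈ e, ∀ y ∈ f, ¬ G.Adj x y

/-- The induced matching number `im(G)`. -/
noncomputable def inducedMatchingNum (G : SimpleGraph V) : ℕ :=
  sSup {k : ℕ | ∃ M, IsInducedMatching G M ∧ M.card = k}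

/-- A maximal matching. -/
def IsMaximalMatching (G : SimpleGraph V) (M : Finset (Sym2 V)) : Prop :=
  IsMatching G M ∧ ∀ N, IsMatching G N → M ⊆ N → N = M

/-- `min-m(G)`: the minimum size of a maximal matching. -/
noncomputable def minMaximalMatchingNum (G : SimpleGraph V) : ℕ :=
  sInf {k : ℕ | ∃ M, IsMaximalMatching G M ∧ M.card = k}

/-- Independent (stable) sets of a graph. -/
def IsIndepSet (G : SimpleGraph V) (A : Finset V) : Prop :=
  ∀ x ∈ A, ∀ y ∈ A, ¬ G.Adj x y

/-- A vertex cover. -/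
def IsVertexCover (G : SimpleGraph V) (C : Finset V) : Prop :=
  ∀ x y, G.Adj x y → x ∈ C ∨ y ∈ C

/-- `α(G[F])`: the maximum size of an independent set of `G` contained in `F`. -/
noncomputable def indepNumOn (G : SimpleGraph V) (F : Finset V) : ℕ :=
  sSup {k : ℕ | ∃ A ⊆ F, IsIndepSet G A ∧ A.card = k}

/-- The circuit cover number of a graph: `ccn(G) = min{α(G[F]) : F a vertex cover}`. -/
noncomputable def ccnG (G : SimpleGraph V) : ℕ :=
  sInf {k : ℕ | ∃ F, IsVertexCover G F ∧ k = indepNumOn G F}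

open Classical in
/-- The closed neighborhood of a vertex, as a `Finset`. -/
noncomputable def closedNbhd (G : SimpleGraph V) (x : V) : Finset V :=
  Finset.univ.filter fun z => z = x ∨ G.Adj x z

/-- The maximum privacy degree `Γ(G) = max{|N[x] \ N[y]| : xy ∈ E(G)}`. -/
noncomputable def privacyDeg (G : SimpleGraph V) : ℕ :=
  sSup {k : ℕ | ∃ x y, G.Adj x y ∧ k = (closedNbhd G x \ closedNbhd G y).card}

open Classical in
/-- The maximum degree `Δ(G)`. -/
noncomputable def maxDeg (G : SimpleGraph V) : ℕ :=
  sSup {k : ℕ | ∃ v, k = (Finset.univ.filter fun z => G.Adj v z).card}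

end Graphs

open Classical in
/-- `V(M)`: the set of vertices incident to the edges of `M`. -/
noncomputable def matchVerts {V : Type*} [Fintype V] (M : Finset (Sym2 V)) : Finset V :=
  Finset.univ.filter fun x => ∃ e ∈ M, x ∈ e

variable {X : Finset (Finset α)}

/-!
In the independence complex of `G[W]`, the deletion and the link of a vertex `v` are the
independence complexes of `G[W - v]` and `G[W \ N[v]]`, and `v` is a non-cone vertex exactly
when it is not isolated in `G[W]`. Induct on `W`, proving the stronger bound
`θ(G[W]) ≤ (Γ + 1) · im(G[W \ D]) + |W ∩ D|` for every vertex set `D`.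
If some vertex `z ∈ W ∩ D` is not isolated in `G[W]`, branch at `z`: both the deletion and the
link lose `z` from `W ∩ D`, which pays for the `+ 1` of the link. Otherwise pick an edge `xu` of
`G[W]` avoiding `D` and branch at `u`. For the link `G[W \ N[u]]` use the induction hypothesis
with `D ∪ N[x]`: this costs at most `|N[x] \ N[u]| ≤ Γ`, and the edge `xu` extends every induced
matching of `G[W \ (N[u] ∪ N[x] ∪ D)]`, so the induced matching term grows by one, leaving room
for `Γ + 1`. Finally `Γ + 1 ≤ Δ`, since `N[x] \ N[y] ⊆ N(x) \ {y}`.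
-/

lemma theta_eq_zero_of_nonConeF_eq_empty (h : nonConeF X = ∅) : theta X = 0 := by
  rw [theta, dif_neg (by simp [h])]

lemma theta_le_max_of_mem_nonConeF {v : α} (hv : v ∈ nonConeF X) :
    theta X ≤ max (theta (delF X v)) (theta (lkF X v) + 1) := by
  rw [theta, dif_pos ⟨v, hv⟩]
  exact Finset.inf'_le _ (Finset.mem_attach _ ⟨v, hv⟩)

section IndependenceComplex

open Finset

variable {V : Type*} [DecidableEq V] {G : SimpleGraph V}

lemma isIndepSet_insert {v : V} {T : Finset V} :
    IsIndepSet G (insert v T) ↔ IsIndepSet G T ∧ ∀ a ∈ T, ¬ G.Adj v a := by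
  simp only [IsIndepSet, forall_mem_insert, G.irrefl, not_false_eq_true, true_and]
  grind [G.adj_comm]

variable [Fintype V]

variable (G) in
noncomputable def indComplexOn (W : Finset V) : Finset (Finset V) :=
  (indComplex G).filter (· ⊆ W)

lemma indComplexOn_univ : indComplexOn G univ = indComplex G :=
  filter_true_of_mem fun S _ => subset_univ S

lemma mem_closedNbhd {x z : V} : z ∈ closedNbhd G x ↔ z = x ∨ G.Adj x z := by
  simp [closedNbhd]

lemma mem_indComplexOn {W S : Finset V} : S ∈ indComplexOn G W ↔ IsIndepSet G S ∧ S ⊆ W := by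
  simp [indComplexOn, indComplex, IsIndepSet]

lemma singleton_mem_indComplexOn {W : Finset V} {v : V} : {v} ∈ indComplexOn G W ↔ v ∈ W := by
  simp [mem_indComplexOn, IsIndepSet]

lemma indComplexOn_inj {W W' : Finset V} : indComplexOn G W = indComplexOn G W' ↔ W = W' := by
  refine ⟨fun h => ?_, congrArg _⟩
  ext v
  rw [← singleton_mem_indComplexOn (G := G), h, singleton_mem_indComplexOn]

lemma delF_indComplexOn (W : Finset V) (v : V) :
    delF (indComplexOn G W) v = indComplexOn G (W.erase v) := by
  ext T
  simp only [delF, mem_filter, mem_indComplexOn, subset_erase]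
  tauto

lemma lkF_indComplexOn {W : Finset V} {v : V} (hv : v ∈ W) :
    lkF (indComplexOn G W) v = indComplexOn G (W \ closedNbhd G v) := by
  ext T
  simp only [lkF, mem_filter, mem_indComplexOn, isIndepSet_insert, insert_subset_iff,
    subset_sdiff, disjoint_right, mem_closedNbhd]
  grind

lemma erase_eq_sdiff_closedNbhd_iff {W : Finset V} {v : V} :
    W.erase v = W \ closedNbhd G v ↔ ∀ w ∈ W, ¬ G.Adj v w := by
  simp only [Finset.ext_iff, mem_erase, mem_sdiff, mem_closedNbhd, not_or]
  grind [G.irrefl]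

lemma mem_nonConeF_indComplexOn {W : Finset V} {v : V} :
    v ∈ nonConeF (indComplexOn G W) ↔ v ∈ W ∧ ∃ w ∈ W, G.Adj v w := by
  have hvert : v ∈ vertF (indComplexOn G W) ↔ v ∈ W := by
    refine ⟨fun h => ?_, fun h => mem_biUnion.mpr ⟨{v}, singleton_mem_indComplexOn.mpr h,
      mem_singleton_self v⟩⟩
    obtain ⟨A, hA, hvA⟩ := mem_biUnion.mp h
    exact (mem_indComplexOn.mp hA).2 hvA
  rw [nonConeF, mem_filter, hvert, and_congr_right_iff]
  intro hv
  rw [delF_indComplexOn, lkF_indComplexOn hv, Ne, indComplexOn_inj,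
    erase_eq_sdiff_closedNbhd_iff]
  push Not
  rfl

lemma theta_indComplexOn_eq_zero {W : Finset V} (h : ∀ v ∈ W, ∀ w ∈ W, ¬ G.Adj v w) :
    theta (indComplexOn G W) = 0 := by
  refine theta_eq_zero_of_nonConeF_eq_empty (eq_empty_of_forall_notMem fun v hv => ?_)
  obtain ⟨hvW, w, hwW, hvw⟩ := mem_nonConeF_indComplexOn.mp hv
  exact h v hvW w hwW hvw

lemma theta_indComplexOn_le_max {W : Finset V} {v w : V} (hv : v ∈ W) (hw : w ∈ W)
    (hvw : G.Adj v w) :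
    theta (indComplexOn G W) ≤ max (theta (indComplexOn G (W.erase v)))
      (theta (indComplexOn G (W \ closedNbhd G v)) + 1) := by
  have := theta_le_max_of_mem_nonConeF (mem_nonConeF_indComplexOn.mpr ⟨hv, w, hw, hvw⟩)
  rwa [delF_indComplexOn, lkF_indComplexOn hv] at this

lemma sdiff_closedNbhd_subset_erase (W : Finset V) (v : V) : W \ closedNbhd G v ⊆ W.erase v :=
  fun _ ha => mem_erase.mpr ⟨fun h => (mem_sdiff.mp ha).2 (mem_closedNbhd.mpr (.inl h)),
    (mem_sdiff.mp ha).1⟩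

end IndependenceComplex

section InducedMatchings

open Finset

variable {V : Type*} {G : SimpleGraph V}

lemma isInducedMatching_empty : IsInducedMatching G ∅ :=
  ⟨⟨by simp, by simp⟩, by simp⟩

lemma IsInducedMatching.insert [DecidableEq V] {M : Finset (Sym2 V)}
    (hM : IsInducedMatching G M) {e : Sym2 V} (he : e ∈ G.edgeSet) (hfar : ∀ f ∈ M, ∀ a ∈ f, ∀ b ∈ e, a ≠ b ∧ ¬ G.Adj a b) :
    IsInducedMatching G (insert e M) := by
  refine ⟨⟨forall_mem_insert _ _ _ |>.mpr ⟨he, hM.1.1⟩, ?_⟩, ?_⟩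
  · intro f hf g hg hfg a haf hag
    rcases mem_insert.mp hf with rfl | hfM <;> rcases mem_insert.mp hg with rfl | hgM
    · exact hfg rfl
    · exact (hfar g hgM a hag a haf).1 rfl
    · exact (hfar f hfM a haf a hag).1 rfl
    · exact hM.1.2 f hfM g hgM hfg a haf hag
  · intro f hf g hg hfg a haf b hbg
    rcases mem_insert.mp hf with rfl | hfM <;> rcases mem_insert.mp hg with rfl | hgM
    · exact absurd rfl hfg
    · exact fun h => (hfar g hgM b hbg a haf).2 h.symm
    · exact (hfar f hfM a haf b hbg).2
    · exact hM.2 f hfM g hgM hfg a haf b hbg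

variable [Fintype V]

lemma mem_matchVerts {M : Finset (Sym2 V)} {x : V} : x ∈ matchVerts M ↔ ∃ e ∈ M, x ∈ e := by
  simp [matchVerts]

variable (G) in
noncomputable def inducedMatchingNumOn (W : Finset V) : ℕ :=
  sSup {k : ℕ | ∃ M, IsInducedMatching G M ∧ matchVerts M ⊆ W ∧ M.card = k}

lemma bddAbove_card_inducedMatchings (W : Finset V) :
    BddAbove {k : ℕ | ∃ M, IsInducedMatching G M ∧ matchVerts M ⊆ W ∧ M.card = k} :=
  ⟨Fintype.card (Sym2 V), by rintro _ ⟨M, -, -, rfl⟩; exact card_le_univ M⟩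

lemma card_le_inducedMatchingNumOn {W : Finset V} {M : Finset (Sym2 V)}
    (hM : IsInducedMatching G M) (hMW : matchVerts M ⊆ W) :
    M.card ≤ inducedMatchingNumOn G W :=
  le_csSup (bddAbove_card_inducedMatchings W) ⟨M, hM, hMW, rfl⟩

lemma exists_card_eq_inducedMatchingNumOn (W : Finset V) :
    ∃ M, IsInducedMatching G M ∧ matchVerts M ⊆ W ∧ M.card = inducedMatchingNumOn G W :=
  Nat.sSup_mem (s := {k | ∃ M, IsInducedMatching G M ∧ matchVerts M ⊆ W ∧ M.card = k})
    ⟨0, ∅, isInducedMatching_empty, by simp [matchVerts], rfl⟩ (bddAbove_card_inducedMatchings W)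

lemma inducedMatchingNumOn_mono {W W' : Finset V} (h : W' ⊆ W) :
    inducedMatchingNumOn G W' ≤ inducedMatchingNumOn G W := by
  obtain ⟨M, hM, hMW', hcard⟩ := exists_card_eq_inducedMatchingNumOn (G := G) W'
  exact hcard ▸ card_le_inducedMatchingNumOn hM (hMW'.trans h)

lemma inducedMatchingNumOn_univ : inducedMatchingNumOn G univ = inducedMatchingNum G := by
  simp [inducedMatchingNumOn, inducedMatchingNum]

variable [DecidableEq V]

lemma inducedMatchingNumOn_sdiff_add_one_le {W : Finset V} {x y : V} (hxy : G.Adj x y)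
    (hx : x ∈ W) (hy : y ∈ W) :
    inducedMatchingNumOn G ((W \ closedNbhd G x) \ closedNbhd G y) + 1 ≤
      inducedMatchingNumOn G W := by
  obtain ⟨M, hM, hMW, hcard⟩ := exists_card_eq_inducedMatchingNumOn (G := G)
    ((W \ closedNbhd G x) \ closedNbhd G y)
  have hfar : ∀ f ∈ M, ∀ a ∈ f, ∀ b ∈ s(x, y), a ≠ b ∧ ¬ G.Adj a b := by
    intro f hf a haf b hb
    have ha := hMW (mem_matchVerts.mpr ⟨f, hf, haf⟩)
    simp only [mem_sdiff, mem_closedNbhd, not_or] at ha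
    rcases Sym2.mem_iff.mp hb with rfl | rfl
    · exact ⟨ha.1.2.1, fun h => ha.1.2.2 h.symm⟩
    · exact ⟨ha.2.1, fun h => ha.2.2 h.symm⟩
  have hxyM : s(x, y) ∉ M := fun h => (hfar _ h x (Sym2.mem_mk_left x y) x
    (Sym2.mem_mk_left x y)).1 rfl
  rw [← hcard, ← card_insert_of_notMem hxyM]
  refine card_le_inducedMatchingNumOn (hM.insert hxy hfar) fun a ha => ?_
  obtain ⟨f, hf, haf⟩ := mem_matchVerts.mp ha
  rcases mem_insert.mp hf with rfl | hf
  · rcases Sym2.mem_iff.mp haf with rfl | rfl <;> assumption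
  · exact (mem_sdiff.mp (mem_sdiff.mp (hMW (mem_matchVerts.mpr ⟨f, hf, haf⟩))).1).1

end InducedMatchings

section PrivacyDegree

open Finset

variable {V : Type*} [Fintype V] [DecidableEq V] {G : SimpleGraph V}

lemma bddAbove_privacies :
    BddAbove {k : ℕ | ∃ x y, G.Adj x y ∧ k = #(closedNbhd G x \ closedNbhd G y)} :=
  ⟨Fintype.card V, by rintro _ ⟨x, y, -, rfl⟩; exact card_le_univ _⟩

lemma card_closedNbhd_sdiff_le_privacyDeg {x y : V} (hxy : G.Adj x y) :
    #(closedNbhd G x \ closedNbhd G y) ≤ privacyDeg G :=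
  le_csSup bddAbove_privacies ⟨x, y, hxy, rfl⟩

open Classical in
lemma privacyDeg_add_one_le_maxDeg {x y : V} (hxy : G.Adj x y) : privacyDeg G + 1 ≤ maxDeg G := by
  obtain ⟨a, b, hab, hΓ⟩ : privacyDeg G ∈
      {k : ℕ | ∃ x y, G.Adj x y ∧ k = #(closedNbhd G x \ closedNbhd G y)} :=
    Nat.sSup_mem ⟨_, x, y, hxy, rfl⟩ bddAbove_privacies
  have hsub : closedNbhd G a \ closedNbhd G b ⊆ (univ.filter (G.Adj a)).erase b := by
    intro z hz
    simp only [mem_sdiff, mem_closedNbhd, not_or] at hz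
    rcases hz with ⟨rfl | haz, hzb, hbz⟩
    · exact absurd hab.symm hbz
    · simpa [haz] using hzb
  calc privacyDeg G + 1 ≤ #((univ.filter (G.Adj a)).erase b) + 1 := by rw [hΓ]; gcongr
    _ = #(univ.filter (G.Adj a)) := card_erase_add_one (by simpa using hab)
    _ ≤ maxDeg G := le_csSup ⟨Fintype.card V, by rintro _ ⟨v, rfl⟩; exact card_le_univ _⟩ ⟨a, rfl⟩

end PrivacyDegree

section MainBound

open Finset

variable {V : Type*} [Fintype V] [DecidableEq V] {G : SimpleGraph V}

lemma theta_indComplexOn_le_of_mem_inter {W D : Finset V} {z w : V} (hz : z ∈ W) (hzD : z ∈ D)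
    (hw : w ∈ W) (hzw : G.Adj z w)
    (ih : ∀ W' ⊂ W, theta (indComplexOn G W') ≤
      (privacyDeg G + 1) * inducedMatchingNumOn G (W' \ D) + #(W' ∩ D)) :
    theta (indComplexOn G W) ≤
      (privacyDeg G + 1) * inducedMatchingNumOn G (W \ D) + #(W ∩ D) := by
  have hbranch : ∀ W' ⊆ W.erase z, theta (indComplexOn G W') + 1 ≤
      (privacyDeg G + 1) * inducedMatchingNumOn G (W \ D) + #(W ∩ D) := by
    intro W' hW'
    have hθ := ih W' (hW'.trans_ssubset (erase_ssubset hz))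
    have him : inducedMatchingNumOn G (W' \ D) ≤ inducedMatchingNumOn G (W \ D) :=
      inducedMatchingNumOn_mono (sdiff_subset_sdiff (hW'.trans (erase_subset z W)) le_rfl)
    have hcard : #(W' ∩ D) < #(W ∩ D) := by
      refine card_lt_card ((inter_subset_inter_right hW').trans_ssubset ?_)
      rw [erase_inter]
      exact erase_ssubset (mem_inter.mpr ⟨hz, hzD⟩)
    have := Nat.mul_le_mul_left (privacyDeg G + 1) him
    omega
  exact (theta_indComplexOn_le_max hz hw hzw).trans <| max_le
    (Nat.le_of_succ_le (hbranch _ subset_rfl)) (hbranch _ (sdiff_closedNbhd_subset_erase W z))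

lemma theta_indComplexOn_le_of_adj_of_notMem {W D : Finset V} {x u : V} (hx : x ∈ W) (hu : u ∈ W)
    (hxD : x ∉ D) (huD : u ∉ D) (hxu : G.Adj x u)
    (ih : ∀ W' ⊂ W, ∀ D', theta (indComplexOn G W') ≤
      (privacyDeg G + 1) * inducedMatchingNumOn G (W' \ D') + #(W' ∩ D')) :
    theta (indComplexOn G W) ≤
      (privacyDeg G + 1) * inducedMatchingNumOn G (W \ D) + #(W ∩ D) := by
  refine (theta_indComplexOn_le_max hu hx hxu.symm).trans (max_le ?_ ?_)
  · have hθ := ih _ (erase_ssubset hu) D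
    have him : inducedMatchingNumOn G (W.erase u \ D) ≤ inducedMatchingNumOn G (W \ D) :=
      inducedMatchingNumOn_mono (sdiff_subset_sdiff (erase_subset u W) le_rfl)
    have hcard : #(W.erase u ∩ D) ≤ #(W ∩ D) :=
      card_le_card (inter_subset_inter_right (erase_subset u W))
    have := Nat.mul_le_mul_left (privacyDeg G + 1) him
    omega
  · set W' := W \ closedNbhd G u
    have hθ := ih W' ((sdiff_closedNbhd_subset_erase W u).trans_ssubset (erase_ssubset hu))
      (closedNbhd G x ∪ D)
    have hcard : #(W' ∩ (closedNbhd G x ∪ D)) ≤ privacyDeg G + #(W ∩ D) := by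
      refine (card_le_card ?_).trans ((card_union_le _ _).trans
        (Nat.add_le_add_right (card_closedNbhd_sdiff_le_privacyDeg hxu) _))
      intro a ha
      simp only [W', mem_inter, mem_sdiff, mem_union] at ha ⊢
      tauto
    have him : inducedMatchingNumOn G (W' \ (closedNbhd G x ∪ D)) + 1 ≤
        inducedMatchingNumOn G (W \ D) := by
      refine le_trans (Nat.add_le_add_right (inducedMatchingNumOn_mono ?_) 1)
        (inducedMatchingNumOn_sdiff_add_one_le hxu (mem_sdiff.mpr ⟨hx, hxD⟩)
          (mem_sdiff.mpr ⟨hu, huD⟩))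
      intro a ha
      simp only [W', mem_sdiff, mem_union] at ha ⊢
      tauto
    calc theta (indComplexOn G W') + 1
        ≤ (privacyDeg G + 1) * inducedMatchingNumOn G (W' \ (closedNbhd G x ∪ D)) +
            (privacyDeg G + 1) + #(W ∩ D) := by omega
      _ = (privacyDeg G + 1) * (inducedMatchingNumOn G (W' \ (closedNbhd G x ∪ D)) + 1) +
            #(W ∩ D) := by ring
      _ ≤ (privacyDeg G + 1) * inducedMatchingNumOn G (W \ D) + #(W ∩ D) := by gcongr

variable (G) in
theorem theta_indComplexOn_le (W D : Finset V) :
    theta (indComplexOn G W) ≤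
      (privacyDeg G + 1) * inducedMatchingNumOn G (W \ D) + #(W ∩ D) := by
  induction W using Finset.strongInduction generalizing D with
  | H W ih =>
    by_cases hE : ∃ x ∈ W, ∃ u ∈ W, G.Adj x u
    · obtain ⟨x, hx, u, hu, hxu⟩ := hE
      by_cases hxD : x ∈ D
      · exact theta_indComplexOn_le_of_mem_inter hx hxD hu hxu fun W' hW' => ih W' hW' D
      by_cases huD : u ∈ D
      · exact theta_indComplexOn_le_of_mem_inter hu huD hx hxu.symm fun W' hW' => ih W' hW' D
      exact theta_indComplexOn_le_of_adj_of_notMem hx hu hxD huD hxu ih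
    · push Not at hE
      rw [theta_indComplexOn_eq_zero hE]
      exact Nat.zero_le _

end MainBound

theorem theta_le_privacy_succ_mul_im_and_le_maxDeg_mul_im {V : Type*} [Fintype V] [DecidableEq V] (G : SimpleGraph V) :
    thetaG G ≤ (privacyDeg G + 1) * inducedMatchingNum G ∧
      thetaG G ≤ maxDeg G * inducedMatchingNum G := by
  have hθ : thetaG G ≤ (privacyDeg G + 1) * inducedMatchingNum G := by
    simpa [thetaG, indComplexOn_univ, inducedMatchingNumOn_univ] using
      theta_indComplexOn_le G Finset.univ ∅
  refine ⟨hθ, ?_⟩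
  by_cases hE : ∃ x y, G.Adj x y
  · obtain ⟨x, y, hxy⟩ := hE
    exact hθ.trans (Nat.mul_le_mul_right _ (privacyDeg_add_one_le_maxDeg hxy))
  · push Not at hE
    rw [thetaG, ← indComplexOn_univ, theta_indComplexOn_eq_zero fun x _ y _ => hE x y]
    exact Nat.zero_le _

end ThetaPaper
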